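/- arXiv:math/0603655 — 2 statements merged into one kernel-verified Lean document; each statement's English description precedes it below -/
import Mathlib

section
/- For a positive real vector B=(b_1,…,b_l) define ω(B) = ∏_{i=1}^l b_i^{b_i}/Γ(b_i+1). Then for every positive real l-vector B with |B| = b_1+…+b_l and s = |B|/l, one has ω(B) ≥ (s^s/Γ(s+1))^l, i.e., ω(B) ≥ ω(s,…,s). -/
open scoped BigOperators

/-- `ω(B) = ∏ i, B i ^ (B i) / Γ(B i + 1)` for a positive real vector `B`. -/
noncomputable def omegaReal {l : ℕ} (B : Fin l → ℝ) : ℝ :=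
  ∏ i, B i ^ B i / Real.Gamma (B i + 1)

/-! Since `b ^ b / Γ(b+1) = exp (g b)` with `g x = x log x - log Γ(x+1)`, the claim is Jensen's
inequality for `g`. Convexity of `g` passes to the limit from Euler's approximants
`x log x - logGammaSeq (x+1) n`, whose second derivative `1/x - ∑_{m ≤ n} 1/(x+1+m)^2` is
nonnegative because `1/(x+1+m)^2 ≤ 1/(x+m) - 1/(x+m+1)` telescopes. -/

open Real Filter Finset Set Topology

theorem ConvexOn.of_tendsto {𝕜 E β ι : Type*} [Semiring 𝕜] [PartialOrder 𝕜]
    [AddCommMonoid E] [SMul 𝕜 E] [AddCommMonoid β] [PartialOrder β] [SMul 𝕜 β]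
    [TopologicalSpace β] [OrderClosedTopology β] [ContinuousAdd β] [ContinuousConstSMul 𝕜 β]
    {s : Set E} {l : Filter ι} [l.NeBot] {F : ι → E → β} {f : E → β}
    (hF : ∀ᶠ i in l, ConvexOn 𝕜 s (F i)) (hlim : ∀ x ∈ s, Tendsto (fun i ↦ F i x) l (𝓝 (f x))) :
    ConvexOn 𝕜 s f := by
  obtain ⟨i, hi⟩ := hF.exists
  refine ⟨hi.1, fun x hx y hy a b ha hb hab ↦ ?_⟩
  exact le_of_tendsto_of_tendsto (hlim _ (hi.1 hx hy ha hb hab))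
    (((hlim x hx).const_smul a).add ((hlim y hy).const_smul b))
    (hF.mono fun i hi ↦ hi.2 hx hy ha hb hab)

theorem ConvexOn.card_smul_map_average_le {𝕜 E β ι : Type*} [Field 𝕜] [LinearOrder 𝕜]
    [IsStrictOrderedRing 𝕜] [AddCommGroup E] [Module 𝕜 E] [AddCommGroup β] [PartialOrder β]
    [IsOrderedAddMonoid β] [Module 𝕜 β] [IsStrictOrderedModule 𝕜 β] [Fintype ι]
    {s : Set E} {f : E → β} (hf : ConvexOn 𝕜 s f) {p : ι → E} (hp : ∀ i, p i ∈ s) :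
    (Fintype.card ι : 𝕜) • f ((Fintype.card ι : 𝕜)⁻¹ • ∑ i, p i) ≤ ∑ i, f (p i) := by
  cases isEmpty_or_nonempty ι
  · simp
  have hcard : (Fintype.card ι : 𝕜) ≠ 0 := Nat.cast_ne_zero.2 Fintype.card_ne_zero
  have hjensen := hf.map_sum_le (t := univ) (w := fun _ ↦ (Fintype.card ι : 𝕜)⁻¹)
    (fun _ _ ↦ by positivity) (by simp [hcard]) (fun i _ ↦ hp i)
  rw [← smul_sum, ← smul_sum] at hjensen
  calc _ ≤ (Fintype.card ι : 𝕜) • (Fintype.card ι : 𝕜)⁻¹ • ∑ i, f (p i) :=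
        smul_le_smul_of_nonneg_left hjensen (by positivity)
    _ = ∑ i, f (p i) := smul_inv_smul₀ hcard _

theorem sum_range_inv_add_one_add_sq_le_inv {x : ℝ} (hx : 0 < x) (n : ℕ) :
    ∑ m ∈ range n, ((x + 1 + m) ^ 2)⁻¹ ≤ x⁻¹ :=
  calc ∑ m ∈ range n, ((x + 1 + m) ^ 2)⁻¹
      ≤ ∑ m ∈ range n, ((x + m)⁻¹ - (x + (m + 1 : ℕ))⁻¹) := by
        gcongr with m
        have hm : 0 < x + m := by positivity
        rw [Nat.cast_succ, inv_sub_inv hm.ne' (by positivity), add_sub_add_left_eq_sub, add_sub_cancel_left, one_div]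
        exact inv_anti₀ (by positivity) (by nlinarith)
    _ = x⁻¹ - (x + n)⁻¹ := by rw [sum_range_sub' (fun m : ℕ ↦ (x + m)⁻¹)]; simp
    _ ≤ x⁻¹ := sub_le_self _ (by positivity)

theorem convexOn_mul_log_sub_logGammaSeq_add_one (n : ℕ) :
    ConvexOn ℝ (Ioi 0) fun x ↦ x * log x - BohrMollerup.logGammaSeq (x + 1) n := by
  set f' : ℝ → ℝ := fun x ↦ log x + 1 - (log n - ∑ m ∈ range (n + 1), (x + 1 + m)⁻¹)
  have hf : ∀ x ∈ Ioi (0 : ℝ),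
      HasDerivAt (fun x ↦ x * log x - BohrMollerup.logGammaSeq (x + 1) n) (f' x) x := by
    intro x (hx : 0 < x)
    have hsum := HasDerivAt.fun_sum (u := range (n + 1)) fun m _ ↦
      (((hasDerivAt_id' x).add_const 1).add_const (m : ℝ)).log (by positivity)
    have := (hasDerivAt_mul_log hx.ne').sub
      ((((hasDerivAt_id' x).add_const 1).mul_const (log n)).add_const (log n.factorial) |>.sub hsum)
    simp only [one_mul, one_div] at this
    exact this
  have hf' : ∀ x ∈ Ioi (0 : ℝ),
      HasDerivAt f' (x⁻¹ - ∑ m ∈ range (n + 1), ((x + 1 + m) ^ 2)⁻¹) x := by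
    intro x (hx : 0 < x)
    have hsum := HasDerivAt.fun_sum (u := range (n + 1)) fun m _ ↦
      (((hasDerivAt_id' x).add_const 1).add_const (m : ℝ)).inv (by positivity)
    have := ((hasDerivAt_log hx.ne').add_const 1).sub (hsum.const_sub (log n))
    simp only [neg_div, one_div, sum_neg_distrib, sub_neg_eq_add, ← sub_eq_add_neg] at this
    exact this
  refine convexOn_of_hasDerivWithinAt2_nonneg (f' := f')
    (f'' := fun x ↦ x⁻¹ - ∑ m ∈ range (n + 1), ((x + 1 + m) ^ 2)⁻¹) (convex_Ioi 0)
    (fun x hx ↦ (hf x hx).continuousAt.continuousWithinAt) ?_ ?_ ?_ <;> rw [interior_Ioi]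
  · exact fun x hx ↦ (hf x hx).hasDerivWithinAt
  · exact fun x hx ↦ (hf' x hx).hasDerivWithinAt
  · exact fun x hx ↦ sub_nonneg.2 (sum_range_inv_add_one_add_sq_le_inv hx _)

theorem convexOn_mul_log_sub_log_Gamma_add_one :
    ConvexOn ℝ (Ioi 0) fun x ↦ x * log x - log (Gamma (x + 1)) :=
  ConvexOn.of_tendsto (l := atTop) (.of_forall convexOn_mul_log_sub_logGammaSeq_add_one)
    fun _ hx ↦ tendsto_const_nhds.sub (BohrMollerup.tendsto_log_gamma (add_pos hx one_pos))

theorem rpow_self_div_Gamma_add_one {x : ℝ} (hx : 0 < x) :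
    x ^ x / Gamma (x + 1) = exp (x * log x - log (Gamma (x + 1))) := by
  rw [exp_sub, exp_log (Gamma_pos_of_pos (by positivity)), rpow_def_of_pos hx, mul_comm]

theorem omegaReal_ge_uniform {l : ℕ} (B : Fin l → ℝ) (hB : ∀ i, 0 < B i)
    (s : ℝ) (hs : s = (∑ i, B i) / (l : ℝ)) :
    omegaReal B ≥ (s ^ s / Real.Gamma (s + 1)) ^ l := by
  rcases l.eq_zero_or_pos with rfl | hl
  · simp [omegaReal]
  have : NeZero l := ⟨hl.ne'⟩
  have hs_pos : 0 < s := hs ▸ div_pos (sum_pos (fun i _ ↦ hB i) univ_nonempty) (by positivity)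
  have hjensen := convexOn_mul_log_sub_log_Gamma_add_one.card_smul_map_average_le hB
  rw [Fintype.card_fin, smul_eq_mul, smul_eq_mul, ← div_eq_inv_mul, ← hs] at hjensen
  calc (s ^ s / Gamma (s + 1)) ^ l = exp (l * (s * log s - log (Gamma (s + 1)))) := by
        rw [rpow_self_div_Gamma_add_one hs_pos, exp_nat_mul]
    _ ≤ exp (∑ i, (B i * log (B i) - log (Gamma (B i + 1)))) := exp_le_exp.2 hjensen
    _ = omegaReal B := by
        rw [exp_sum, omegaReal]
        exact prod_congr rfl fun i _ ↦ (rpow_self_div_Gamma_add_one (hB i)).symm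
end

section
/- Let W=(w_{ij}) be a positive real m×n matrix and let R=(r_1,…,r_m), C=(c_1,…,c_n) be positive integer vectors with |R|=|C|=N. Then T(R,C;W) ≤ N^{-N} · min{ω(R), ω(C)} · ∫_{Mat(m,n)} f(G;R,C)^N dG, where dG is the exponential measure associated with W. -/
open scoped BigOperators
open MeasureTheory

/-- The total weight `T(R,C;W)` of contingency tables with row sums `R`,
column sums `C`, and weight `∏ W i j ^ D i j` (with the convention `0 ^ 0 = 1`). -/
noncomputable def tableWeight {m n : ℕ} (R : Fin m → ℕ) (C : Fin n → ℕ)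
    (W : Fin m → Fin n → ℝ) : ℝ :=
  ∑' D : {D : Fin m → Fin n → ℕ //
      (∀ i, ∑ j, D i j = R i) ∧ (∀ j, ∑ i, D i j = C j)},
    ∏ i, ∏ j, W i j ^ D.1 i j

/-- `ω(B) = ∏ i, B i ^ (B i) / (B i)!` for a positive integer vector `B`. -/
noncomputable def omegaVec {l : ℕ} (B : Fin l → ℕ) : ℝ :=
  ∏ i, ((B i : ℝ) ^ (B i)) / (Nat.factorial (B i) : ℝ)

/-- `f(G;R,C)`: the infimum of `F(G;x,y) = ∑ i j, G i j * x i * y j` over positive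
vectors `x, y` satisfying `∏ i, x i ^ R i = 1` and `∏ j, y j ^ C j = 1`. -/
noncomputable def scalingInf {m n : ℕ} (G : Fin m → Fin n → ℝ)
    (R : Fin m → ℝ) (C : Fin n → ℝ) : ℝ :=
  sInf {z : ℝ | ∃ (x : Fin m → ℝ) (y : Fin n → ℝ),
    (∀ i, 0 < x i) ∧ (∀ j, 0 < y j) ∧
    (∏ i, x i ^ R i) = 1 ∧ (∏ j, y j ^ C j) = 1 ∧
    z = ∑ i, ∑ j, G i j * x i * y j}

/-- The exponential measure `dG` on `Mat(m,n)` associated with a positive matrix `W`: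
its density w.r.t. Lebesgue measure is `∏ i j, (W i j)⁻¹ exp (-(G i j) / W i j)` on
matrices with all entries positive, and `0` elsewhere. -/
noncomputable def expMeasure {m n : ℕ} (W : Fin m → Fin n → ℝ) :
    Measure (Fin m → Fin n → ℝ) :=
  volume.withDensity fun G =>
    ENNReal.ofReal (∏ i, ∏ j,
      if 0 < G i j then (W i j)⁻¹ * Real.exp (-(G i j) / W i j) else 0)

/-!
Since `∫ t ^ d / d! dExp(w) = w ^ d`, integrating `P(G) = ∑_D ∏ g_ij ^ d_ij / d_ij!` (the sum
running over the tables with margins `(R,C)`) against `dG` gives `T(R,C;W)`, so it suffices to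
bound `P` pointwise. `P` does not change when `G` is replaced by `(g_ij ξ_i η_j)` with
`∏ ξ_i ^ r_i = ∏ η_j ^ c_j = 1`. Dropping the column constraints and applying the multinomial
theorem row by row gives `P(G) ≤ ∏_i (∑_j g_ij) ^ r_i / r_i!`, and weighted AM-GM with weights
`r_i / N` bounds this by `ω(R) N^{-N} (∑ g_ij) ^ N`. Taking the infimum over `ξ, η` gives
`P(G) ≤ ω(R) N^{-N} f(G;R,C) ^ N`, and transposing gives the same with `ω(C)`.
-/

open MeasureTheory Finset
open scoped Nat

theorem pow_mul_prod_pow_le_prod_pow_mul_sum_pow {ι : Type*} (s : Finset ι) (k : ι → ℕ)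
    {z : ι → ℝ} (hz : ∀ i ∈ s, 0 ≤ z i) {N : ℕ} (hN : ∑ i ∈ s, k i = N) :
    (N : ℝ) ^ N * ∏ i ∈ s, z i ^ k i ≤ (∏ i ∈ s, (k i : ℝ) ^ k i) * (∑ i ∈ s, z i) ^ N := by
  rcases N.eq_zero_or_pos with rfl | hNpos
  · have hk : ∀ i ∈ s, k i = 0 := sum_eq_zero_iff.1 hN
    have hz1 : ∏ i ∈ s, z i ^ k i = 1 := prod_eq_one fun i hi => by rw [hk i hi, pow_zero]
    have hk1 : ∏ i ∈ s, (k i : ℝ) ^ k i = 1 := prod_eq_one fun i hi => by rw [hk i hi, pow_zero]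
    simp [hz1, hk1]
  have hN0 : (0 : ℝ) < N := by exact_mod_cast hNpos
  set w : ι → ℝ := fun i => k i / N
  set u : ι → ℝ := fun i => z i * N / k i
  have hu : ∀ i ∈ s, 0 ≤ u i := fun i hi => by have := hz i hi; positivity
  have hw1 : ∑ i ∈ s, w i = 1 := by
    rw [← sum_div, ← Nat.cast_sum, hN, div_self hN0.ne']
  -- where `k i = 0` the point `u i` is the junk value `z i * N / 0 = 0`, but its weight is `0`
  have hmean : ∑ i ∈ s, w i * u i ≤ ∑ i ∈ s, z i := sum_le_sum fun i hi => by
    rcases (k i).eq_zero_or_pos with hki | hki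
    · simp [w, hki, hz i hi]
    · have : (0 : ℝ) < k i := by exact_mod_cast hki
      exact le_of_eq (by simp only [w, u]; field_simp)
  have hamgm := (Real.geom_mean_le_arith_mean_weighted s w u (fun i _ => by positivity) hw1
    hu).trans hmean
  have hpow : (∏ i ∈ s, u i ^ w i) ^ N = ∏ i ∈ s, u i ^ k i := by
    rw [← prod_pow]
    refine prod_congr rfl fun i hi => ?_
    rw [← Real.rpow_natCast, ← Real.rpow_mul (hu i hi), div_mul_cancel₀ _ hN0.ne',
      Real.rpow_natCast]
  have hkk : ∏ i ∈ s, (k i : ℝ) ^ k i ≠ 0 :=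
    prod_ne_zero_iff.2 fun i _ => by exact_mod_cast Nat.pow_self_pos.ne'
  have hprod : (∏ i ∈ s, (k i : ℝ) ^ k i) * ∏ i ∈ s, u i ^ k i =
      (N : ℝ) ^ N * ∏ i ∈ s, z i ^ k i := by
    simp only [u, div_pow, mul_pow, prod_div_distrib, prod_mul_distrib, prod_pow_eq_pow_sum, hN]
    field_simp
  rw [← hprod, ← hpow]
  gcongr
  exact prod_nonneg fun i hi => Real.rpow_nonneg (hu i hi) _

lemma le_mul_sInf_pow {S : Set ℝ} (hS : S.Nonempty) (hS0 : ∀ z ∈ S, 0 ≤ z) {b K : ℝ}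
    (hK : 0 ≤ K) (N : ℕ) (hb : ∀ z ∈ S, b ≤ K * z ^ N) : b ≤ K * sInf S ^ N := by
  set g : ℝ → ℝ := fun z => K * max z 0 ^ N
  have hg : Monotone g := fun x y hxy =>
    mul_le_mul_of_nonneg_left (pow_le_pow_left₀ (le_max_right _ _) (max_le_max_right 0 hxy) N) hK
  have hinf := hg.map_csInf_of_continuousAt (by fun_prop : Continuous g).continuousAt hS ⟨0, hS0⟩
  calc b ≤ sInf (g '' S) := le_csInf (hS.image g) <| Set.forall_mem_image.2 fun z hz => by
          simpa only [g, max_eq_left (hS0 z hz)] using hb z hz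
    _ = K * sInf S ^ N := by rw [← hinf]; simp only [g, max_eq_left (Real.sInf_nonneg hS0)]

lemma sum_piAntidiag_prod_pow_div_factorial {ι K : Type*} [Fintype ι] [DecidableEq ι] [Field K]
    [CharZero K] (v : ι → K) (c : ℕ) :
    ∑ k ∈ univ.piAntidiag c, ∏ i, v i ^ k i / (k i)! = (∑ i, v i) ^ c / c ! := by
  rw [sum_pow_eq_sum_piAntidiag, sum_div]
  refine sum_congr rfl fun k hk => ?_
  have hc : (c ! : K) = (∏ i, ((k i)! : K)) * Nat.multinomial univ k := by
    rw [← (mem_piAntidiag.1 hk).1]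
    exact_mod_cast (Nat.multinomial_spec univ k).symm
  have hfac : (∏ i, ((k i)! : K)) ≠ 0 :=
    prod_ne_zero_iff.2 fun i _ => Nat.cast_ne_zero.2 (Nat.factorial_ne_zero _)
  have hmul : (Nat.multinomial univ k : K) ≠ 0 :=
    Nat.cast_ne_zero.2 (Nat.multinomial_pos _ _).ne'
  rw [prod_div_distrib, hc]
  field_simp

section Tables

variable {m n : ℕ}

def tables (R : Fin m → ℕ) (C : Fin n → ℕ) : Finset (Fin m → Fin n → ℕ) :=
  {D ∈ Fintype.piFinset fun i => univ.piAntidiag (R i) | ∀ j, ∑ i, D i j = C j}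

lemma mem_tables {R : Fin m → ℕ} {C : Fin n → ℕ} {D : Fin m → Fin n → ℕ} :
    D ∈ tables R C ↔ (∀ i, ∑ j, D i j = R i) ∧ ∀ j, ∑ i, D i j = C j := by
  simp [tables]

lemma tableWeight_eq_sum (R : Fin m → ℕ) (C : Fin n → ℕ) (W : Fin m → Fin n → ℝ) :
    tableWeight R C W = ∑ D ∈ tables R C, ∏ i, ∏ j, W i j ^ D i j := by
  rw [tableWeight, ← Finset.tsum_subtype,
    ← (Equiv.subtypeEquivRight fun D => mem_tables.symm).tsum_eq]
  rfl

/-- Integrated against `expMeasure W`, this polynomial in `a` gives `T(R,C;W)`. -/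
noncomputable def tablePoly (R : Fin m → ℕ) (C : Fin n → ℕ) (a : Fin m → Fin n → ℝ) : ℝ :=
  ∑ D ∈ tables R C, ∏ i, ∏ j, a i j ^ D i j / (D i j)!

lemma tablePoly_transpose (R : Fin m → ℕ) (C : Fin n → ℕ) (a : Fin m → Fin n → ℝ) :
    tablePoly C R (fun j i => a i j) = tablePoly R C a := by
  refine sum_nbij' (fun D i j => D j i) (fun D j i => D i j) (fun D hD => ?_) (fun D hD => ?_)
    (fun _ _ => rfl) (fun _ _ => rfl) (fun _ _ => prod_comm)
  · rw [mem_tables] at hD ⊢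
    exact hD.symm
  · rw [mem_tables] at hD ⊢
    exact hD.symm

lemma tablePoly_rescale (R : Fin m → ℕ) (C : Fin n → ℕ) (a : Fin m → Fin n → ℝ)
    {x : Fin m → ℝ} {y : Fin n → ℝ} (hx : ∏ i, x i ^ R i = 1) (hy : ∏ j, y j ^ C j = 1) :
    tablePoly R C (fun i j => a i j * x i * y j) = tablePoly R C a := by
  refine sum_congr rfl fun D hD => ?_
  obtain ⟨hrow, hcol⟩ := mem_tables.1 hD
  have hxD : ∏ i, ∏ j, x i ^ D i j = 1 := by simp_rw [prod_pow_eq_pow_sum, hrow, hx]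
  have hyD : ∏ i, ∏ j, y j ^ D i j = 1 := by
    rw [prod_comm]
    simp_rw [prod_pow_eq_pow_sum, hcol, hy]
  calc ∏ i, ∏ j, (a i j * x i * y j) ^ D i j / (D i j)!
      = (∏ i, ∏ j, a i j ^ D i j / (D i j)!) * (∏ i, ∏ j, x i ^ D i j) *
          ∏ i, ∏ j, y j ^ D i j := by
        simp only [← prod_mul_distrib, mul_pow]
        refine prod_congr rfl fun i _ => prod_congr rfl fun j _ => ?_
        ring
    _ = ∏ i, ∏ j, a i j ^ D i j / (D i j)! := by rw [hxD, hyD, mul_one, mul_one]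

lemma tablePoly_le_prod_sum_pow_div_factorial (R : Fin m → ℕ) (C : Fin n → ℕ)
    {a : Fin m → Fin n → ℝ} (ha : ∀ i j, 0 ≤ a i j) :
    tablePoly R C a ≤ ∏ i, (∑ j, a i j) ^ R i / (R i)! := by
  calc tablePoly R C a
      ≤ ∑ D ∈ Fintype.piFinset fun i => univ.piAntidiag (R i), ∏ i, ∏ j, a i j ^ D i j / (D i j)! :=
        sum_le_sum_of_subset_of_nonneg (filter_subset _ _) fun D _ _ =>
          prod_nonneg fun i _ => prod_nonneg fun j _ => by have := ha i j; positivity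
    _ = ∏ i, ∑ k ∈ univ.piAntidiag (R i), ∏ j, a i j ^ k j / (k j)! :=
        (prod_univ_sum (fun i => univ.piAntidiag (R i))
          fun i k => ∏ j, a i j ^ k j / (k j)!).symm
    _ = ∏ i, (∑ j, a i j) ^ R i / (R i)! :=
        prod_congr rfl fun i _ => sum_piAntidiag_prod_pow_div_factorial _ _

lemma tablePoly_le_omegaVec_mul_sum_pow (R : Fin m → ℕ) (C : Fin n → ℕ) {N : ℕ}
    (hRN : ∑ i, R i = N) {a : Fin m → Fin n → ℝ} (ha : ∀ i j, 0 ≤ a i j) :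
    tablePoly R C a ≤ omegaVec R * ((N : ℝ) ^ N)⁻¹ * (∑ i, ∑ j, a i j) ^ N := by
  have hamgm := pow_mul_prod_pow_le_prod_pow_mul_sum_pow univ R
    (z := fun i => ∑ j, a i j) (fun i _ => sum_nonneg fun j _ => ha i j) hRN
  have hNN : (0 : ℝ) < (N : ℝ) ^ N := by exact_mod_cast Nat.pow_self_pos
  calc tablePoly R C a ≤ ∏ i, (∑ j, a i j) ^ R i / (R i)! :=
        tablePoly_le_prod_sum_pow_div_factorial R C ha
    _ = (∏ i, (∑ j, a i j) ^ R i) * ∏ i, ((R i)! : ℝ)⁻¹ := by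
        rw [prod_div_distrib, div_eq_mul_inv, prod_inv_distrib]
    _ ≤ (∏ i, (R i : ℝ) ^ R i) * ((N : ℝ) ^ N)⁻¹ * (∑ i, ∑ j, a i j) ^ N *
          ∏ i, ((R i)! : ℝ)⁻¹ := by
        gcongr ?_ * _
        rw [mul_right_comm, ← div_eq_mul_inv, le_div_iff₀ hNN]
        linarith
    _ = omegaVec R * ((N : ℝ) ^ N)⁻¹ * (∑ i, ∑ j, a i j) ^ N := by
        rw [omegaVec, prod_div_distrib, div_eq_mul_inv, prod_inv_distrib]
        ring

end Tables

section ScalingInf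

variable {m n : ℕ}

def posOrthant (m n : ℕ) : Set (Fin m → Fin n → ℝ) :=
  Set.univ.pi fun _ => Set.univ.pi fun _ => Set.Ioi 0

lemma mem_posOrthant {G : Fin m → Fin n → ℝ} : G ∈ posOrthant m n ↔ ∀ i j, 0 < G i j := by
  simp [posOrthant]

lemma isOpen_posOrthant : IsOpen (posOrthant m n) :=
  isOpen_set_pi Set.finite_univ fun _ _ => isOpen_set_pi Set.finite_univ fun _ _ => isOpen_Ioi

lemma convex_posOrthant : Convex ℝ (posOrthant m n) :=
  convex_pi fun _ _ => convex_pi fun _ _ => convex_Ioi 0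

def scalingValues (G : Fin m → Fin n → ℝ) (R : Fin m → ℝ) (C : Fin n → ℝ) : Set ℝ :=
  {z | ∃ (x : Fin m → ℝ) (y : Fin n → ℝ), (∀ i, 0 < x i) ∧ (∀ j, 0 < y j) ∧
    (∏ i, x i ^ R i) = 1 ∧ (∏ j, y j ^ C j) = 1 ∧ z = ∑ i, ∑ j, G i j * x i * y j}

variable {G : Fin m → Fin n → ℝ} {R : Fin m → ℝ} {C : Fin n → ℝ}

lemma scalingInf_eq_sInf : scalingInf G R C = sInf (scalingValues G R C) := rfl

lemma sum_mem_scalingValues : (∑ i, ∑ j, G i j) ∈ scalingValues G R C :=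
  ⟨fun _ => 1, fun _ => 1, fun _ => one_pos, fun _ => one_pos, by simp, by simp, by simp⟩

lemma nonneg_of_mem_scalingValues (hG : ∀ i j, 0 ≤ G i j) {z : ℝ}
    (hz : z ∈ scalingValues G R C) : 0 ≤ z := by
  obtain ⟨x, y, hx, hy, -, -, rfl⟩ := hz
  exact sum_nonneg fun i _ => sum_nonneg fun j _ =>
    mul_nonneg (mul_nonneg (hG i j) (hx i).le) (hy j).le

lemma scalingInf_le (hG : ∀ i j, 0 ≤ G i j) {z : ℝ} (hz : z ∈ scalingValues G R C) :
    scalingInf G R C ≤ z :=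
  csInf_le ⟨0, fun _ => nonneg_of_mem_scalingValues hG⟩ hz

lemma scalingInf_nonneg (hG : ∀ i j, 0 ≤ G i j) : 0 ≤ scalingInf G R C :=
  Real.sInf_nonneg fun _ => nonneg_of_mem_scalingValues hG

lemma scalingInf_le_sum (hG : ∀ i j, 0 ≤ G i j) : scalingInf G R C ≤ ∑ i, ∑ j, G i j :=
  scalingInf_le hG sum_mem_scalingValues

lemma scalingInf_transpose : scalingInf (fun j i => G i j) C R = scalingInf G R C := by
  suffices scalingValues (fun j i => G i j) C R = scalingValues G R C by
    rw [scalingInf_eq_sInf, scalingInf_eq_sInf, this]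
  ext z
  constructor
  · rintro ⟨y, x, hy, hx, hyC, hxR, rfl⟩
    exact ⟨x, y, hx, hy, hxR, hyC, by rw [sum_comm]; simp only [mul_right_comm]⟩
  · rintro ⟨x, y, hx, hy, hxR, hyC, rfl⟩
    exact ⟨y, x, hy, hx, hyC, hxR, by rw [sum_comm]; simp only [mul_right_comm]⟩

variable (R C) in
lemma concaveOn_scalingInf : ConcaveOn ℝ (posOrthant m n) fun G => scalingInf G R C := by
  refine ⟨convex_posOrthant, fun G₁ h₁ G₂ h₂ a b ha hb _ => ?_⟩
  rw [mem_posOrthant] at h₁ h₂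
  refine le_csInf ⟨_, sum_mem_scalingValues⟩ ?_
  rintro z ⟨x, y, hx, hy, hxR, hyC, rfl⟩
  have e₁ := scalingInf_le (fun i j => (h₁ i j).le) ⟨x, y, hx, hy, hxR, hyC, rfl⟩
  have e₂ := scalingInf_le (fun i j => (h₂ i j).le) ⟨x, y, hx, hy, hxR, hyC, rfl⟩
  calc a • scalingInf G₁ R C + b • scalingInf G₂ R C
      ≤ a * ∑ i, ∑ j, G₁ i j * x i * y j + b * ∑ i, ∑ j, G₂ i j * x i * y j := by
        simp only [smul_eq_mul]
        gcongr
    _ = ∑ i, ∑ j, (a • G₁ + b • G₂) i j * x i * y j := by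
        simp only [Pi.add_apply, Pi.smul_apply, smul_eq_mul, mul_sum, ← sum_add_distrib]
        exact sum_congr rfl fun i _ => sum_congr rfl fun j _ => by ring

end ScalingInf

section PointwiseBound

variable {m n N : ℕ} {R : Fin m → ℕ} {C : Fin n → ℕ} {G : Fin m → Fin n → ℝ}

lemma tablePoly_le_omegaVec_mul_scalingInf_pow (hRN : ∑ i, R i = N) (hG : ∀ i j, 0 ≤ G i j) :
    tablePoly R C G ≤
      omegaVec R * ((N : ℝ) ^ N)⁻¹ *
        scalingInf G (fun i => (R i : ℝ)) (fun j => (C j : ℝ)) ^ N := by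
  refine le_mul_sInf_pow ⟨_, sum_mem_scalingValues⟩ (fun _ => nonneg_of_mem_scalingValues hG)
    (by unfold omegaVec; positivity) N ?_
  rintro z ⟨x, y, hx, hy, hxR, hyC, rfl⟩
  simp only [Real.rpow_natCast] at hxR hyC
  rw [← tablePoly_rescale R C G hxR hyC]
  exact tablePoly_le_omegaVec_mul_sum_pow R C hRN fun i j =>
    mul_nonneg (mul_nonneg (hG i j) (hx i).le) (hy j).le

lemma tablePoly_le_min_omegaVec_mul_scalingInf_pow (hRN : ∑ i, R i = N) (hCN : ∑ j, C j = N)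
    (hG : ∀ i j, 0 ≤ G i j) :
    tablePoly R C G ≤ ((N : ℝ) ^ N)⁻¹ * min (omegaVec R) (omegaVec C) *
      scalingInf G (fun i => (R i : ℝ)) (fun j => (C j : ℝ)) ^ N := by
  have hrow := tablePoly_le_omegaVec_mul_scalingInf_pow (C := C) hRN hG
  have hcol := tablePoly_le_omegaVec_mul_scalingInf_pow (C := R) (G := fun j i => G i j) hCN
    fun j i => hG i j
  rw [tablePoly_transpose, scalingInf_transpose] at hcol
  rcases min_cases (omegaVec R) (omegaVec C) with ⟨h, -⟩ | ⟨h, -⟩ <;> rw [h] <;> linarith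

end PointwiseBound

section ExpMeasure

noncomputable def expDensity (w t : ℝ) : ℝ :=
  if 0 < t then w⁻¹ * Real.exp (-t / w) else 0

lemma measurable_expDensity (w : ℝ) : Measurable (expDensity w) :=
  Measurable.ite measurableSet_Ioi (by fun_prop) measurable_const

lemma expDensity_nonneg {w : ℝ} (hw : 0 < w) (t : ℝ) : 0 ≤ expDensity w t := by
  unfold expDensity
  split_ifs <;> positivity

lemma pos_of_expDensity_ne_zero {w t : ℝ} (h : expDensity w t ≠ 0) : 0 < t := by
  by_contra ht
  exact h (if_neg ht)

lemma integral_expDensity_mul_pow_div_factorial {w : ℝ} (hw : 0 < w) (d : ℕ) :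
    ∫ t, expDensity w t * (t ^ d / d !) = w ^ d := by
  have hind : (fun t => expDensity w t * (t ^ d / d !)) = (Set.Ioi 0).indicator
      fun t => (w⁻¹ / d !) * (t ^ ((d + 1 : ℝ) - 1) * Real.exp (-(w⁻¹ * t))) := by
    ext t
    by_cases ht : 0 < t
    · simp only [expDensity, if_pos ht, Set.indicator_of_mem (Set.mem_Ioi.2 ht),
        add_sub_cancel_right, Real.rpow_natCast]
      rw [show -t / w = -(w⁻¹ * t) by ring]
      ring
    · simp [expDensity, ht]
  rw [hind, integral_indicator measurableSet_Ioi, integral_const_mul,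
    Real.integral_rpow_mul_exp_neg_mul_Ioi (by positivity) (inv_pos.2 hw), one_div, inv_inv,
    Real.Gamma_nat_eq_factorial, ← Nat.cast_succ, Real.rpow_natCast, pow_succ]
  field_simp

lemma integrable_expDensity_mul_pow_div_factorial {w : ℝ} (hw : 0 < w) (d : ℕ) :
    Integrable fun t => expDensity w t * (t ^ d / d !) :=
  .of_integral_ne_zero <| by rw [integral_expDensity_mul_pow_div_factorial hw]; positivity

variable {ι κ : Type*} [Fintype ι] [Fintype κ]

lemma integral_prod_prod_apply (f : ι → κ → ℝ → ℝ) :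
    ∫ G : ι → κ → ℝ, ∏ i, ∏ j, f i j (G i j) = ∏ i, ∏ j, ∫ t, f i j t := by
  rw [integral_fintype_prod_volume_eq_prod fun i (v : κ → ℝ) => ∏ j, f i j (v j)]
  exact prod_congr rfl fun i _ => integral_fintype_prod_volume_eq_prod _

lemma integrable_prod_prod_apply {f : ι → κ → ℝ → ℝ} (hf : ∀ i j, Integrable (f i j)) :
    Integrable fun G : ι → κ → ℝ => ∏ i, ∏ j, f i j (G i j) :=
  Integrable.fintype_prod_dep fun i => Integrable.fintype_prod_dep (hf i)

variable {m n : ℕ} {W : Fin m → Fin n → ℝ}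

lemma expMeasure_eq_withDensity (W : Fin m → Fin n → ℝ) :
    expMeasure W = volume.withDensity fun G =>
      ((∏ i, ∏ j, expDensity (W i j) (G i j)).toNNReal : ENNReal) := rfl

lemma measurable_prod_prod_expDensity (W : Fin m → Fin n → ℝ) :
    Measurable fun G : Fin m → Fin n → ℝ => ∏ i, ∏ j, expDensity (W i j) (G i j) :=
  Finset.measurable_prod _ fun i _ => Finset.measurable_prod _ fun j _ =>
    (measurable_expDensity _).comp ((measurable_pi_apply j).comp (measurable_pi_apply i))

lemma integral_expMeasure (hW : ∀ i j, 0 < W i j) (f : (Fin m → Fin n → ℝ) → ℝ) :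
    ∫ G, f G ∂expMeasure W = ∫ G, (∏ i, ∏ j, expDensity (W i j) (G i j)) * f G := by
  rw [expMeasure_eq_withDensity,
    integral_withDensity_eq_integral_smul (measurable_prod_prod_expDensity W).real_toNNReal]
  simp only [NNReal.smul_def, smul_eq_mul, Real.coe_toNNReal _
    (prod_nonneg fun i _ => prod_nonneg fun j _ => expDensity_nonneg (hW i j) _)]

lemma integrable_expMeasure_iff (hW : ∀ i j, 0 < W i j) {f : (Fin m → Fin n → ℝ) → ℝ} :
    Integrable f (expMeasure W) ↔
      Integrable fun G => (∏ i, ∏ j, expDensity (W i j) (G i j)) * f G := by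
  rw [expMeasure_eq_withDensity,
    integrable_withDensity_iff_integrable_smul (measurable_prod_prod_expDensity W).real_toNNReal]
  simp only [NNReal.smul_def, smul_eq_mul, Real.coe_toNNReal _
    (prod_nonneg fun i _ => prod_nonneg fun j _ => expDensity_nonneg (hW i j) _)]

lemma ae_mem_posOrthant (W : Fin m → Fin n → ℝ) : ∀ᵐ G ∂expMeasure W, G ∈ posOrthant m n := by
  rw [expMeasure_eq_withDensity,
    ae_withDensity_iff (measurable_prod_prod_expDensity W).real_toNNReal.coe_nnreal_ennreal]
  refine ae_of_all _ fun G hG => mem_posOrthant.2 fun i j =>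
    pos_of_expDensity_ne_zero (w := W i j) ?_
  have hprod : 0 < ∏ i, ∏ j, expDensity (W i j) (G i j) := by simpa using hG
  exact prod_ne_zero_iff.1 (prod_ne_zero_iff.1 hprod.ne' i (mem_univ i)) j (mem_univ j)

lemma integral_prod_pow_div_factorial_expMeasure (hW : ∀ i j, 0 < W i j)
    (d : Fin m → Fin n → ℕ) :
    ∫ G, ∏ i, ∏ j, G i j ^ d i j / (d i j)! ∂expMeasure W = ∏ i, ∏ j, W i j ^ d i j := by
  rw [integral_expMeasure hW]
  simp only [← prod_mul_distrib]
  rw [integral_prod_prod_apply fun i j t => expDensity (W i j) t * (t ^ d i j / (d i j)!)]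
  exact prod_congr rfl fun i _ => prod_congr rfl fun j _ =>
    integral_expDensity_mul_pow_div_factorial (hW i j) _

lemma integrable_prod_pow_div_factorial_expMeasure (hW : ∀ i j, 0 < W i j)
    (d : Fin m → Fin n → ℕ) :
    Integrable (fun G : Fin m → Fin n → ℝ => ∏ i, ∏ j, G i j ^ d i j / (d i j)!)
      (expMeasure W) := by
  rw [integrable_expMeasure_iff hW]
  simp only [← prod_mul_distrib]
  exact integrable_prod_prod_apply (f := fun i j t => expDensity (W i j) t * (t ^ d i j / (d i j)!))
    fun i j => integrable_expDensity_mul_pow_div_factorial (hW i j) (d i j)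

lemma integrable_sum_pow_expMeasure (hW : ∀ i j, 0 < W i j) (N : ℕ) :
    Integrable (fun G : Fin m → Fin n → ℝ => (∑ i, ∑ j, G i j) ^ N) (expMeasure W) := by
  have hexpand : (fun G : Fin m → Fin n → ℝ => (∑ i, ∑ j, G i j) ^ N) = fun G : Fin m → Fin n → ℝ =>
      N ! * ∑ k ∈ (univ : Finset (Fin m × Fin n)).piAntidiag N, ∏ p, G p.1 p.2 ^ k p / (k p)! := by
    ext G
    rw [sum_piAntidiag_prod_pow_div_factorial (fun p : Fin m × Fin n => G p.1 p.2),
      ← Fintype.sum_prod_type', mul_div_cancel₀ _ (by positivity)]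
  rw [hexpand]
  refine (integrable_finsetSum _ fun k _ => ?_).const_mul _
  simpa only [Fintype.prod_prod_type] using
    integrable_prod_pow_div_factorial_expMeasure hW fun i j => k (i, j)

end ExpMeasure

section Integrals

variable {m n : ℕ} {W : Fin m → Fin n → ℝ}

lemma integrable_tablePoly (R : Fin m → ℕ) (C : Fin n → ℕ) (hW : ∀ i j, 0 < W i j) :
    Integrable (tablePoly R C) (expMeasure W) :=
  integrable_finsetSum _ fun D _ => integrable_prod_pow_div_factorial_expMeasure hW D

lemma integral_tablePoly (R : Fin m → ℕ) (C : Fin n → ℕ) (hW : ∀ i j, 0 < W i j) :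
    ∫ G, tablePoly R C G ∂expMeasure W = tableWeight R C W := by
  unfold tablePoly
  rw [tableWeight_eq_sum,
    integral_finsetSum _ fun D _ => integrable_prod_pow_div_factorial_expMeasure hW D]
  exact sum_congr rfl fun D _ => integral_prod_pow_div_factorial_expMeasure hW D

lemma aestronglyMeasurable_scalingInf (W : Fin m → Fin n → ℝ) (R : Fin m → ℝ) (C : Fin n → ℝ) :
    AEStronglyMeasurable (fun G => scalingInf G R C) (expMeasure W) := by
  have h := ((concaveOn_scalingInf R C).continuousOn isOpen_posOrthant).aestronglyMeasurable
    (μ := expMeasure W) isOpen_posOrthant.measurableSet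
  rwa [Measure.restrict_eq_self_of_ae_mem (ae_mem_posOrthant W)] at h

lemma integrable_scalingInf_pow (hW : ∀ i j, 0 < W i j) (R : Fin m → ℝ) (C : Fin n → ℝ)
    (N : ℕ) : Integrable (fun G => scalingInf G R C ^ N) (expMeasure W) := by
  refine (integrable_sum_pow_expMeasure hW N).mono' ((aestronglyMeasurable_scalingInf W R C).pow N)
    ?_
  filter_upwards [ae_mem_posOrthant W] with G hG
  have hG' : ∀ i j, 0 ≤ G i j := fun i j => (mem_posOrthant.1 hG i j).le
  rw [Real.norm_eq_abs, abs_of_nonneg (pow_nonneg (scalingInf_nonneg hG') N)]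
  exact pow_le_pow_left₀ (scalingInf_nonneg hG') (scalingInf_le_sum hG') N

end Integrals

theorem tableWeight_upper_bound_integral_general {m n N : ℕ}
    (W : Fin m → Fin n → ℝ) (hW : ∀ i j, 0 < W i j)
    (R : Fin m → ℕ) (C : Fin n → ℕ)
    (hRN : ∑ i, R i = N) (hCN : ∑ j, C j = N) :
    tableWeight R C W ≤
      ((N : ℝ) ^ N)⁻¹ * min (omegaVec R) (omegaVec C) *
        ∫ G, scalingInf G (fun i => (R i : ℝ)) (fun j => (C j : ℝ)) ^ N
          ∂(expMeasure W) := by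
  rw [← integral_tablePoly R C hW, ← integral_const_mul]
  refine integral_mono_ae (integrable_tablePoly R C hW)
    ((integrable_scalingInf_pow hW _ _ N).const_mul _) ?_
  filter_upwards [ae_mem_posOrthant W] with G hG
  exact tablePoly_le_min_omegaVec_mul_scalingInf_pow hRN hCN fun i j =>
    (mem_posOrthant.1 hG i j).le

theorem tableWeight_upper_bound_integral {m n N : ℕ}
    (W : Fin m → Fin n → ℝ) (hW : ∀ i j, 0 < W i j)
    (R : Fin m → ℕ) (C : Fin n → ℕ)
    (hRpos : ∀ i, 0 < R i) (hCpos : ∀ j, 0 < C j)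
    (hRN : ∑ i, R i = N) (hCN : ∑ j, C j = N) :
    tableWeight R C W ≤
      ((N : ℝ) ^ N)⁻¹ * min (omegaVec R) (omegaVec C) *
        ∫ G, scalingInf G (fun i => (R i : ℝ)) (fun j => (C j : ℝ)) ^ N
          ∂(expMeasure W) :=
  tableWeight_upper_bound_integral_general W hW R C hRN hCN
end
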